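/- For all n ≥ 4, the type T_n is not (n-1)-recording. That is, there do not exist a state q0, a partition of n-1 processes into nonempty teams A and B, and operations op_1,...,op_{n-1} (each being op_A or op_B) satisfying: (1) Q_A ∩ Q_B = ∅, (2) q0 ∉ Q_A or |B| = 1, (3) q0 ∉ Q_B or |A| = 1. The proof shows that q0 must be (⊥,0,0), the two teams must be assigned distinct operations, and then |A| ≤ ⌊n/2⌋ - 1 and |B| ≤ ⌈n/2⌉ - 1, contradicting |A| + |B| = n - 1. -/

import Mathlib

/-- A deterministic shared object type: states, operations, responses, and a
deterministic transition function giving new state and response. -/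
structure DetType where
  State : Type
  Op : Type
  Resp : Type
  tr : Op → State → State × Resp

namespace DetType

/-- Apply a sequence of operations to a state. -/
def applySeq (T : DetType) (l : List T.Op) (q : T.State) : T.State :=
  l.foldl (fun s o => (T.tr o s).1) q

/-- `Q_X(q0, op)`: states reachable from `q0` by applying `op_{i_1},...,op_{i_α}`
for a sequence of distinct indices whose first index is in `X`. -/
def QSet (T : DetType) {n : ℕ} (q0 : T.State) (op : Fin n → T.Op)
    (X : Finset (Fin n)) : Set T.State :=
  { q | ∃ l : List (Fin n), l.Nodup ∧ (∃ i ∈ X, l.head? = some i) ∧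
      T.applySeq (l.map op) q0 = q }

/-- `R_{X,j}`: pairs (response of `op_j`, final state) arising from sequences of
distinct indices containing `j` whose first index is in `X`, applied from `q0`. -/
def RSet (T : DetType) {n : ℕ} (q0 : T.State) (op : Fin n → T.Op)
    (X : Finset (Fin n)) (j : Fin n) : Set (T.Resp × T.State) :=
  { p | ∃ l1 l2 : List (Fin n), (l1 ++ j :: l2).Nodup ∧
      (∃ i ∈ X, (l1 ++ j :: l2).head? = some i) ∧
      p.1 = (T.tr (op j) (T.applySeq (l1.map op) q0)).2 ∧
      p.2 = T.applySeq ((l1 ++ j :: l2).map op) q0 }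

/-- `T` is `n`-discerning. -/
def isDiscerning (T : DetType) (n : ℕ) : Prop :=
  ∃ (q0 : T.State) (A B : Finset (Fin n)) (op : Fin n → T.Op),
    A.Nonempty ∧ B.Nonempty ∧ Disjoint A B ∧ A ∪ B = Finset.univ ∧
    ∀ j, T.RSet q0 op A j ∩ T.RSet q0 op B j = ∅

/-- `T` is `n`-recording. -/
def isRecording (T : DetType) (n : ℕ) : Prop :=
  ∃ (q0 : T.State) (A B : Finset (Fin n)) (op : Fin n → T.Op),
    A.Nonempty ∧ B.Nonempty ∧ Disjoint A B ∧ A ∪ B = Finset.univ ∧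
    T.QSet q0 op A ∩ T.QSet q0 op B = ∅ ∧
    (q0 ∉ T.QSet q0 op A ∨ B.card = 1) ∧
    (q0 ∉ T.QSet q0 op B ∨ A.card = 1)

end DetType

open DetType

/-- States of the type `T_n`: `none` is the state (⊥,0,0); `some (w,r,c)` has
winner `w` (`true` = 𝔸, `false` = 𝔹), row `r` and column `c`. -/
abbrev TnState := Option (Bool × ℕ × ℕ)

/-- Transitions of `T_n`.  The operation `true` is `op_A`, `false` is `op_B`.
Responses are `true` = 𝔸, `false` = 𝔹. -/
def TnTr (n : ℕ) : Bool → TnState → TnState × Bool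
  | true, none => (some (true, 0, 0), true)
  | true, some (w, r, c) =>
      (if (c + 1) % (n / 2) = 0 then none else some (w, r, (c + 1) % (n / 2)), w)
  | false, none => (some (false, 0, 0), false)
  | false, some (w, r, c) =>
      (if (r + 1) % ((n + 1) / 2) = 0 then none else some (w, (r + 1) % ((n + 1) / 2), c), w)

/-- The type `T_n`. -/
def Tn (n : ℕ) : DetType := ⟨TnState, Bool, Bool, TnTr n⟩

/-- The valid states of `T_n`: row below ⌈n/2⌉ and column below ⌊n/2⌋. -/
def TnValid (n : ℕ) : TnState → Prop
  | none => True
  | some (_, r, c) => r < (n + 1) / 2 ∧ c < n / 2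

/-! If a member of team `A` and a member of team `B` applied the same operation, their solo runs
from `q0` would reach the same state, so one team uses `op_A` and the other `op_B`. From a state
`(w, r, c)` the operations `op_A` and `op_B` commute unless one of them resets the state, so some
one- or two-step run of team `A` and some of team `B` reach a common state; hence `q0 = (⊥, 0, 0)`.
From there one `op_B` followed by `⌊n/2⌋` distinct `op_A`s resets the state to `q0`; so if
`|A| ≥ ⌊n/2⌋` then `q0 ∈ Q_B`, and condition (3) forces `|A| = 1 < ⌊n/2⌋`. Symmetrically
`|B| < ⌈n/2⌉`, whence `|A| + |B| ≤ n - 2`. -/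

namespace DetType

variable (T : DetType)

lemma applySeq_replicate_succ (o : T.Op) (k : ℕ) (q : T.State) :
    T.applySeq (List.replicate (k + 1) o) q = T.applySeq (List.replicate k o) (T.tr o q).1 := rfl

variable {T} {m : ℕ} {q0 : T.State} {op : Fin m → T.Op}

lemma applySeq_mem_QSet {X : Finset (Fin m)} {i : Fin m} (hi : i ∈ X) {t : List (Fin m)}
    (hnd : (i :: t).Nodup) : T.applySeq ((i :: t).map op) q0 ∈ T.QSet q0 op X :=
  ⟨i :: t, hnd, ⟨i, hi, rfl⟩, rfl⟩

lemma tr_mem_QSet {X : Finset (Fin m)} {i : Fin m} (hi : i ∈ X) {o : T.Op} (hop : op i = o) :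
    (T.tr o q0).1 ∈ T.QSet q0 op X := by
  subst hop
  exact applySeq_mem_QSet hi (List.nodup_singleton i)

lemma tr_tr_mem_QSet {X : Finset (Fin m)} {i j : Fin m} (hi : i ∈ X) (hij : i ≠ j) {o o' : T.Op}
    (hopi : op i = o) (hopj : op j = o') : (T.tr o' (T.tr o q0).1).1 ∈ T.QSet q0 op X := by
  subst hopi hopj
  exact applySeq_mem_QSet (t := [j]) hi (by simp [hij])

lemma op_ne_of_QSet_inter_eq_empty {A B : Finset (Fin m)}
    (hQ : T.QSet q0 op A ∩ T.QSet q0 op B = ∅) {a b : Fin m} (ha : a ∈ A) (hb : b ∈ B) :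
    op a ≠ op b := fun hab =>
  Set.eq_empty_iff_forall_notMem.mp hQ _ ⟨tr_mem_QSet ha hab, tr_mem_QSet hb rfl⟩

lemma applySeq_cons_replicate_mem_QSet {Y S : Finset (Fin m)} {y : Fin m} (hy : y ∈ Y)
    (hyS : y ∉ S) {o o' : T.Op} (hopy : op y = o) (hopS : ∀ s ∈ S, op s = o') {k : ℕ}
    (hk : k ≤ S.card) : T.applySeq (o :: List.replicate k o') q0 ∈ T.QSet q0 op Y := by
  obtain ⟨t, htS, rfl⟩ := Finset.exists_subset_card_eq hk
  have hnd : (y :: t.toList).Nodup :=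
    List.nodup_cons.mpr ⟨fun h => hyS (htS (Finset.mem_toList.mp h)), t.nodup_toList⟩
  have hmap : t.toList.map op = List.replicate t.card o' := by
    rw [List.eq_replicate_iff, List.length_map, Finset.length_toList]
    refine ⟨rfl, ?_⟩
    simp only [List.mem_map, Finset.mem_toList]
    rintro _ ⟨s, hs, rfl⟩
    exact hopS s (htS hs)
  have hmem := applySeq_mem_QSet (op := op) (q0 := q0) hy hnd
  rwa [List.map_cons, hopy, hmap] at hmem

end DetType

lemma Bool.exists_eq_on_of_ne {α : Type*} {f : α → Bool} {A B : Finset α} (hA : A.Nonempty)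
    (hB : B.Nonempty) (hne : ∀ a ∈ A, ∀ b ∈ B, f a ≠ f b) :
    ∃ v : Bool, (∀ a ∈ A, f a = v) ∧ ∀ b ∈ B, f b = !v := by
  obtain ⟨a₀, ha₀⟩ := hA
  obtain ⟨b₀, hb₀⟩ := hB
  refine ⟨f a₀, fun a ha => ?_, fun b hb => Bool.eq_not_iff.mpr (hne a₀ ha₀ b hb).symm⟩
  exact (Bool.eq_not_iff.mpr (hne a ha b₀ hb₀)).trans (Bool.eq_not_iff.mpr (hne a₀ ha₀ b₀ hb₀)).symm

namespace Tn

variable {n : ℕ}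

lemma tr_true_some {w : Bool} {r c : ℕ} (hc : c < n / 2) :
    ((Tn n).tr true (some (w, r, c))).1 = if c + 1 = n / 2 then none else some (w, r, c + 1) := by
  rcases (Nat.succ_le_of_lt hc).eq_or_lt with h | h
  · simp [Tn, TnTr, ← h]
  · simp [Tn, TnTr, Nat.mod_eq_of_lt h, h.ne]

lemma tr_false_some {w : Bool} {r c : ℕ} (hr : r < (n + 1) / 2) :
    ((Tn n).tr false (some (w, r, c))).1 =
      if r + 1 = (n + 1) / 2 then none else some (w, r + 1, c) := by
  rcases (Nat.succ_le_of_lt hr).eq_or_lt with h | h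
  · simp [Tn, TnTr, ← h]
  · simp [Tn, TnTr, Nat.mod_eq_of_lt h, h.ne]

lemma applySeq_replicate_true (w : Bool) (r : ℕ) {c k : ℕ} (hk : 0 < k) (hck : c + k = n / 2) :
    (Tn n).applySeq (List.replicate k true) (some (w, r, c)) = none := by
  induction k generalizing c with
  | zero => omega
  | succ k ih =>
    refine (DetType.applySeq_replicate_succ (Tn n) true k _).trans ?_
    rw [tr_true_some (by omega)]
    rcases Nat.eq_zero_or_pos k with rfl | hk
    · rw [if_pos (by omega)]
      rfl
    · rw [if_neg (by omega)]
      exact ih hk (by omega)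

lemma applySeq_replicate_false (w : Bool) (c : ℕ) {r k : ℕ} (hk : 0 < k)
    (hrk : r + k = (n + 1) / 2) :
    (Tn n).applySeq (List.replicate k false) (some (w, r, c)) = none := by
  induction k generalizing r with
  | zero => omega
  | succ k ih =>
    refine (DetType.applySeq_replicate_succ (Tn n) false k _).trans ?_
    rw [tr_false_some (by omega)]
    rcases Nat.eq_zero_or_pos k with rfl | hk
    · rw [if_pos (by omega)]
      rfl
    · rw [if_neg (by omega)]
      exact ih hk (by omega)

lemma exists_common_state_of_valid {q : (Tn n).State} (hq : TnValid n q) (hq_ne : q ≠ none) :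
    (({((Tn n).tr true q).1, ((Tn n).tr false ((Tn n).tr true q).1).1} : Set (Tn n).State) ∩
      {((Tn n).tr false q).1, ((Tn n).tr true ((Tn n).tr false q).1).1}).Nonempty := by
  obtain ⟨⟨w, r, c⟩, rfl⟩ := Option.ne_none_iff_exists'.mp hq_ne
  obtain ⟨hr, hc⟩ := hq
  by_cases hcw : c + 1 = n / 2 <;> by_cases hrw : r + 1 = (n + 1) / 2 <;>
    simp only [tr_true_some hc, tr_false_some hr, hcw, hrw, if_true, if_false]
  · exact ⟨none, .inl rfl, .inl rfl⟩
  · exact ⟨none, .inl rfl, .inr rfl⟩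
  · exact ⟨none, .inr rfl, .inl rfl⟩
  · exact ⟨_, .inr rfl, .inr rfl⟩

variable {m : ℕ} {op : Fin m → (Tn n).Op} {X Y : Finset (Fin m)}

lemma eq_none_of_QSet_inter_eq_empty {q0 : (Tn n).State} (hq0 : TnValid n q0) {x y : Fin m}
    (hx : x ∈ X) (hy : y ∈ Y) (hxy : x ≠ y) (hopx : op x = true) (hopy : op y = false)
    (hQ : (Tn n).QSet q0 op X ∩ (Tn n).QSet q0 op Y = ∅) : q0 = none := by
  by_contra hne
  have hX := Set.pair_subset (DetType.tr_mem_QSet (q0 := q0) hx hopx)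
    (DetType.tr_tr_mem_QSet hx hxy hopx hopy)
  have hY := Set.pair_subset (DetType.tr_mem_QSet (q0 := q0) hy hopy)
    (DetType.tr_tr_mem_QSet hy hxy.symm hopy hopx)
  exact Set.nonempty_iff_ne_empty.mp
    ((exists_common_state_of_valid hq0 hne).mono (Set.inter_subset_inter hX hY)) hQ

lemma none_mem_QSet_of_le_card_true {y : Fin m} (hy : y ∈ Y) (hyX : y ∉ X) (hopy : op y = false)
    (hopX : ∀ x ∈ X, op x = true) (hX : n / 2 ≤ X.card) (hn : 2 ≤ n) :
    none ∈ (Tn n).QSet none op Y := by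
  have hrun : (Tn n).applySeq (false :: List.replicate (n / 2) true) none = none :=
    applySeq_replicate_true false 0 (by omega) (by omega)
  have hmem := DetType.applySeq_cons_replicate_mem_QSet (q0 := none) hy hyX hopy hopX hX
  rwa [hrun] at hmem

lemma none_mem_QSet_of_le_card_false {x : Fin m} (hx : x ∈ X) (hxY : x ∉ Y) (hopx : op x = true)
    (hopY : ∀ y ∈ Y, op y = false) (hY : (n + 1) / 2 ≤ Y.card) (hn : 0 < n) :
    none ∈ (Tn n).QSet none op X := by
  have hrun : (Tn n).applySeq (true :: List.replicate ((n + 1) / 2) false) none = none :=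
    applySeq_replicate_false true 0 (by omega) (by omega)
  have hmem := DetType.applySeq_cons_replicate_mem_QSet (q0 := none) hx hxY hopx hopY hY
  rwa [hrun] at hmem

lemma card_add_card_lt {q0 : (Tn n).State} (hn : 4 ≤ n) (hq0 : TnValid n q0)
    (hX : X.Nonempty) (hY : Y.Nonempty) (hd : Disjoint X Y)
    (hopX : ∀ x ∈ X, op x = true) (hopY : ∀ y ∈ Y, op y = false)
    (hQ : (Tn n).QSet q0 op X ∩ (Tn n).QSet q0 op Y = ∅)
    (hqX : q0 ∉ (Tn n).QSet q0 op X ∨ Y.card = 1) (hqY : q0 ∉ (Tn n).QSet q0 op Y ∨ X.card = 1) :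
    X.card + Y.card < n - 1 := by
  obtain ⟨x, hx⟩ := hX
  obtain ⟨y, hy⟩ := hY
  have hxY : x ∉ Y := Finset.disjoint_left.mp hd hx
  obtain rfl : q0 = none :=
    eq_none_of_QSet_inter_eq_empty hq0 hx hy (ne_of_mem_of_not_mem hy hxY).symm
      (hopX x hx) (hopY y hy) hQ
  have hXcard : X.card < n / 2 := by
    by_contra! h
    have hmem := none_mem_QSet_of_le_card_true hy (Finset.disjoint_right.mp hd hy) (hopY y hy)
      hopX h (by omega)
    rcases hqY with hqY | hqY
    · exact hqY hmem
    · omega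
  have hYcard : Y.card < (n + 1) / 2 := by
    by_contra! h
    have hmem := none_mem_QSet_of_le_card_false hx hxY (hopX x hx) hopY h (by omega)
    rcases hqX with hqX | hqX
    · exact hqX hmem
    · omega
  omega

end Tn

/-- For n ≥ 4, `T_n` is not (n-1)-recording: no valid state `q0`, partition of
n-1 processes into nonempty teams, and assignment of operations satisfies the
three recording conditions. -/
theorem stmt6 (n : ℕ) (hn : 4 ≤ n) :
    ¬ ∃ (q0 : (Tn n).State) (A B : Finset (Fin (n - 1))) (op : Fin (n - 1) → (Tn n).Op),
      TnValid n q0 ∧ A.Nonempty ∧ B.Nonempty ∧ Disjoint A B ∧ A ∪ B = Finset.univ ∧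
      (Tn n).QSet q0 op A ∩ (Tn n).QSet q0 op B = ∅ ∧
      (q0 ∉ (Tn n).QSet q0 op A ∨ B.card = 1) ∧
      (q0 ∉ (Tn n).QSet q0 op B ∨ A.card = 1) := by
  rintro ⟨q0, A, B, op, hq0, hA, hB, hd, hu, hQ, hqA, hqB⟩
  have hcard : A.card + B.card = n - 1 := by
    rw [← Finset.card_union_of_disjoint hd, hu, Finset.card_univ, Fintype.card_fin]
  obtain ⟨v, hopA, hopB⟩ := Bool.exists_eq_on_of_ne hA hB
    fun a ha b hb => DetType.op_ne_of_QSet_inter_eq_empty hQ ha hb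
  cases v with
  | true =>
    have := Tn.card_add_card_lt hn hq0 hA hB hd hopA hopB hQ hqA hqB
    omega
  | false =>
    have := Tn.card_add_card_lt hn hq0 hB hA hd.symm hopB hopA (Set.inter_comm _ _ ▸ hQ) hqB hqA
    omega
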